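/- Every function Q ∈ L²(−1,1) can be written as Q(t) = e^{−2πt} ∑_{n∈ℤ} a_n e^{2πint} + e^{2πt} ∑_{n∈ℤ} b_n e^{2πint} for almost every t ∈ (−1,1), where {a_n} and {b_n} are square-summable sequences of complex numbers and both series converge in L²(−1,1). -/

import Mathlib

open MeasureTheory Complex Set Filter
open scoped Real ENNReal Topology NNReal

noncomputable section

/-- The spectrum of a function: the closure of the set where its Fourier transform
(with kernel `e^{-2πitx}`) does not vanish. -/
def Sp (f : ℝ → ℂ) : Set ℝ := closure {t : ℝ | FourierTransform.fourier f t ≠ 0}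

/-- The space `L¹(ℝ)` of (classes of) integrable functions. -/
abbrev L1 : Type := Lp ℂ 1 (volume : Measure ℝ)

/-- The Paley–Wiener space `PW¹_S`, viewed as a subset of `L¹(ℝ)`. -/
def PW (S : Set ℝ) : Set L1 := {f : L1 | Sp ⇑f ⊆ S}

/-- The closed unit ball of `PW¹_S`. -/
def pwBall (S : Set ℝ) : Set L1 := {f : L1 | f ∈ PW S ∧ ‖f‖ ≤ 1}

/-- `f` is an exposed point of `A`: there is a norm-one continuous linear functional `φ`
such that `f` is the unique element `g` of `A` with `φ g = 1`. -/
def IsExposedPoint (A : Set L1) (f : L1) : Prop :=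
  f ∈ A ∧ ∃ φ : L1 →L[ℂ] ℂ, ‖φ‖ = 1 ∧ {g : L1 | g ∈ A ∧ φ g = 1} = {f}

/-- `Λ(F)`: the set of non-real points `λ` with `F λ = F λ̄ = 0`. -/
def Lam (F : ℂ → ℂ) : Set ℂ :=
  {z : ℂ | z.im ≠ 0 ∧ F z = 0 ∧ F ((starRingEnd ℂ) z) = 0}

/-- `n(x)`: the largest `n` such that `F` vanishes at `x` together with its first
`2n - 1` derivatives. -/
def OmegaHalf (F : ℂ → ℂ) (x : ℝ) : ℕ :=
  sSup {n : ℕ | ∀ k < 2 * n, iteratedDeriv k F (x : ℂ) = 0}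

/-- The multiplicity `2 n(x)` of a real point `x` in the multiset `Ω(F)`;
`x ∈ Ω(F)` iff `OmegaMult F x ≠ 0`. -/
def OmegaMult (F : ℂ → ℂ) (x : ℝ) : ℕ := 2 * OmegaHalf F x

/-- `F` has exponential type at most `d`. -/
def ExpTypeLE (F : ℂ → ℂ) (d : ℝ) : Prop :=
  ∀ ε > 0, ∃ C : ℝ, ∀ z : ℂ, ‖F z‖ ≤ C * Real.exp ((d + ε) * ‖z‖)

/-- Condition (exp2): `∫ℝ |f| w = ∞` for every nonconstant entire `w` of exponential type
zero that is real and nonnegative on `ℝ`. -/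
def InfiniteWeightedIntegrals (f : ℝ → ℂ) : Prop :=
  ∀ w : ℂ → ℂ, Differentiable ℂ w → ExpTypeLE w 0 →
    (∀ x : ℝ, (w (x : ℂ)).im = 0 ∧ 0 ≤ (w (x : ℂ)).re) →
    (∀ c : ℂ, w ≠ fun _ => c) →
    ∫⁻ x : ℝ, ENNReal.ofReal (‖f x‖ * (w (x : ℂ)).re) = ⊤

/-- The exponential system `E(Γ)` (for a multiset given by a multiplicity function
`m : ℂ → ℕ`) viewed inside `L²(-a,a)`. -/
def expSystem (m : ℂ → ℕ) (a : ℝ) :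
    Set (Lp ℂ 2 (volume.restrict (Ioo (-a) a))) :=
  {u | ∃ γ : ℂ, ∃ k : ℕ, k < m γ ∧
    ∀ᵐ t ∂(volume.restrict (Ioo (-a) a)),
      u t = (t : ℂ) ^ k * Complex.exp (2 * Real.pi * Complex.I * γ * t)}

/-- The system `E(Γ)` is complete in `L²(-a,a)`. -/
def IsCompleteExp (m : ℂ → ℕ) (a : ℝ) : Prop :=
  Dense ((Submodule.span ℂ (expSystem m a) : Submodule ℂ _) :
    Set (Lp ℂ 2 (volume.restrict (Ioo (-a) a))))

/-- The completeness radius `R(Γ)` of the exponential system with multiplicity function `m`. -/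
def complRadius (m : ℂ → ℕ) : ℝ := sSup {a : ℝ | 0 ≤ a ∧ IsCompleteExp m a}

open Classical in
/-- The multiplicity function of the multiset `Λ(F) ∪ Ω(F)`. -/
def LamOmegaMult (F : ℂ → ℂ) (γ : ℂ) : ℕ :=
  if γ.im = 0 then OmegaMult F γ.re else (if γ ∈ Lam F then 1 else 0)

open Classical in
/-- The multiplicity function of the set `Λ(F)`. -/
def LamMult (F : ℂ → ℂ) (γ : ℂ) : ℕ := if γ ∈ Lam F then 1 else 0

/-- A sequence of (open, nondegenerate, pairwise disjoint) intervals, given by the pairs of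
endpoints. -/
def DisjointIntervals (I : ℕ → ℝ × ℝ) : Prop :=
  (∀ n, (I n).1 < (I n).2) ∧
  Pairwise (Function.onFun Disjoint fun n => Ioo (I n).1 (I n).2)

/-- A sequence of intervals is long (in the sense of Beurling and Malliavin). -/
def IsLong (I : ℕ → ℝ × ℝ) : Prop :=
  ¬ Summable fun n =>
    ((I n).2 - (I n).1) ^ 2 / (1 + (Metric.infDist 0 (Ioo (I n).1 (I n).2)) ^ 2)

/-- `#(s) ≥ c` (allowing infinite sets). -/
def countGE (s : Set ℝ) (c : ℝ) : Prop := s.Finite → c ≤ (s.ncard : ℝ)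

/-- `#(s) ≤ c` (allowing infinite sets). -/
def countLE (s : Set ℝ) (c : ℝ) : Prop := s.Finite ∧ (s.ncard : ℝ) ≤ c

/-- `Γ` is `d`-regular: every sequence of disjoint intervals on which the counting ratio of
`Γ` deviates from `d` by at least `ε` is short. -/
def DRegular (Γ : Set ℝ) (d : ℝ) : Prop :=
  ∀ ε > 0, ∀ I : ℕ → ℝ × ℝ, DisjointIntervals I →
    (∀ n, countLE (Γ ∩ Ioo (I n).1 (I n).2) ((d - ε) * ((I n).2 - (I n).1)) ∨
      countGE (Γ ∩ Ioo (I n).1 (I n).2) ((d + ε) * ((I n).2 - (I n).1))) →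
    ¬ IsLong I

/-- The interior Beurling–Malliavin density. -/
def DBMinterior (Γ : Set ℝ) : ℝ≥0∞ :=
  ⨆ d ∈ {d : ℝ | ∃ Γ' ⊆ Γ, DRegular Γ' d}, ENNReal.ofReal d

/-- The exterior Beurling–Malliavin density. -/
def DBMexterior (Γ : Set ℝ) : ℝ≥0∞ :=
  ⨆ d ∈ {d : ℝ | ∃ I : ℕ → ℝ × ℝ, DisjointIntervals I ∧ IsLong I ∧
    ∀ n, countGE (Γ ∩ Ioo (I n).1 (I n).2) (d * ((I n).2 - (I n).1))},
    ENNReal.ofReal d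

/-- The set of sign changes of (the restriction to `ℝ` of) `F`. -/
def SignSet (F : ℂ → ℂ) : Set ℝ :=
  {x : ℝ | ∀ δ > 0, ∃ y z : ℝ,
    x - δ < y ∧ y < x ∧ x < z ∧ z < x + δ ∧ (F (y : ℂ)).re * (F (z : ℂ)).re < 0}

end

noncomputable section

/-- `f` admits the (unique) decomposition `f = f₋ + f₊` with entire extensions,
`Sp(f₋) ⊆ [-σ,-ρ]`, `Sp(f₊) ⊆ [ρ,σ]`, and moreover `Λ(f₋) ∩ Λ(f₊) = ∅`. -/
def LamSplitEmpty (σ ρ : ℝ) (f : L1) : Prop :=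
  ∃ Fm Fp : ℂ → ℂ, Differentiable ℂ Fm ∧ Differentiable ℂ Fp ∧
    (Integrable fun x : ℝ => Fm (x : ℂ)) ∧ (Integrable fun x : ℝ => Fp (x : ℂ)) ∧
    Sp (fun x : ℝ => Fm (x : ℂ)) ⊆ Icc (-σ) (-ρ) ∧
    Sp (fun x : ℝ => Fp (x : ℂ)) ⊆ Icc ρ σ ∧
    (∀ᵐ x : ℝ ∂volume, f x = Fm (x : ℂ) + Fp (x : ℂ)) ∧
    Lam Fm ∩ Lam Fp = ∅

/-- `f` admits the (unique) decomposition `f = f₋ + f₊` with entire extensions,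
`Sp(f₋) ⊆ [-σ,-ρ]`, `Sp(f₊) ⊆ [ρ,σ]`, and moreover `Ω(f₋) ∩ Ω(f₊) = ∅` (as multisets). -/
def OmegaSplitEmpty (σ ρ : ℝ) (f : L1) : Prop :=
  ∃ Fm Fp : ℂ → ℂ, Differentiable ℂ Fm ∧ Differentiable ℂ Fp ∧
    (Integrable fun x : ℝ => Fm (x : ℂ)) ∧ (Integrable fun x : ℝ => Fp (x : ℂ)) ∧
    Sp (fun x : ℝ => Fm (x : ℂ)) ⊆ Icc (-σ) (-ρ) ∧
    Sp (fun x : ℝ => Fp (x : ℂ)) ⊆ Icc ρ σ ∧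
    (∀ᵐ x : ℝ ∂volume, f x = Fm (x : ℂ) + Fp (x : ℂ)) ∧
    (∀ x : ℝ, OmegaMult Fm x = 0 ∨ OmegaMult Fp x = 0)

end

/-! For `s ∈ (0, 1]` the two values `Q s` and `Q (s - 1)` are linear combinations of
`u = e^{-2πs} F₁ s` and `v = e^{2πs} F₂ s` for 1-periodic `F₁, F₂`:
`Q s = u + v` and `Q (s - 1) = e^{2π} u + e^{-2π} v`. The determinant `e^{-2π} - e^{2π}` is
nonzero, so solving this system on `(0, 1]` and extending periodically gives `F₁, F₂`, which are
square-integrable on the circle `ℝ/ℤ` because the weights `e^{±2πs}` are bounded there. Their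
Fourier series converge in `L²(ℝ/ℤ)`, and as `(-1, 1]` covers the circle exactly twice, the
pullback of that convergence is convergence in `L²(-1, 1)`. -/

open AddCircle

theorem AddCircle.map_coe_restrict_Ioc_add_nat_mul (T : ℝ) [hT : Fact (0 < T)] (t : ℝ) (N : ℕ) :
    Measure.map ((↑) : ℝ → AddCircle T) (volume.restrict (Ioc t (t + N * T))) =
      N • volume := by
  induction N with
  | zero => simp
  | succ N ih =>
    have hsplit : Ioc t (t + (N + 1 : ℕ) * T) =
        Ioc t (t + N * T) ∪ Ioc (t + N * T) (t + N * T + T) := by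
      rw [Ioc_union_Ioc_eq_Ioc (le_add_of_nonneg_right (by have := hT.out; positivity))
        (by linarith [hT.out])]
      push_cast; ring_nf
    rw [hsplit, Measure.restrict_union (Ioc_disjoint_Ioc_of_le le_rfl) measurableSet_Ioc,
      Measure.map_add _ _ AddCircle.measurable_mk', ih,
      (AddCircle.measurePreserving_mk T _).map_eq, succ_nsmul]

section Fourier

variable {T : ℝ} [Fact (0 < T)] {G : AddCircle T → ℂ}

theorem MeasureTheory.MemLp.summable_sq_fourierCoeff (hG : MemLp G 2 AddCircle.haarAddCircle) :
    Summable fun n : ℤ => ‖fourierCoeff G n‖ ^ 2 := by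
  simpa only [fourierCoeff_congr_ae hG.coeFn_toLp] using
    (hasSum_sq_fourierCoeff (hG.toLp G)).summable

theorem MeasureTheory.MemLp.tendsto_eLpNorm_fourier_partial_sum
    (hG : MemLp G 2 AddCircle.haarAddCircle) :
    Tendsto (fun s : Finset ℤ => eLpNorm
      (fun x => G x - ∑ n ∈ s, fourierCoeff G n • fourier n x) 2 AddCircle.haarAddCircle)
      atTop (𝓝 0) := by
  set f := hG.toLp G
  have hpartial : ∀ s : Finset ℤ, ∑ n ∈ s, fourierCoeff f n • fourierLp (T := T) 2 n =
      ContinuousMap.toLp 2 AddCircle.haarAddCircle ℂ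
        (∑ n ∈ s, fourierCoeff f n • fourier (T := T) n) := by
    intro s
    simp only [fourierLp, map_sum, map_smul]
  have hL2 : Tendsto
      (fun s : Finset ℤ => ‖f - ∑ n ∈ s, fourierCoeff f n • fourierLp (T := T) 2 n‖ₑ)
      atTop (𝓝 0) := by
    have h := (hasSum_fourier_series_L2 f).const_sub f
    rw [sub_self] at h
    simpa [Function.comp_def] using (continuous_enorm.tendsto _).comp h
  refine hL2.congr fun s => ?_
  rw [Lp.enorm_def, hpartial]
  refine eLpNorm_congr_ae ?_
  filter_upwards [Lp.coeFn_sub f (ContinuousMap.toLp 2 AddCircle.haarAddCircle ℂ _),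
    hG.coeFn_toLp,
    ContinuousMap.coeFn_toLp (p := 2) (μ := AddCircle.haarAddCircle) (𝕜 := ℂ)
      (∑ n ∈ s, fourierCoeff f n • fourier (T := T) n)] with x hsub hf hS
  rw [hsub, Pi.sub_apply, hS, hf, fourierCoeff_congr_ae hG.coeFn_toLp]
  simp

theorem MeasureTheory.MemLp.tendsto_eLpNorm_fourier_partial_sum_comp_coe
    (hG : MemLp G 2 AddCircle.haarAddCircle) (t : ℝ) (N : ℕ) :
    Tendsto (fun s : Finset ℤ => eLpNorm
      (fun x : ℝ => G x - ∑ n ∈ s, fourierCoeff G n • fourier n (x : AddCircle T)) 2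
      (volume.restrict (Ioc t (t + N * T)))) atTop (𝓝 0) := by
  set c : ℝ≥0∞ := N * ENNReal.ofReal T
  have hmap : Measure.map ((↑) : ℝ → AddCircle T) (volume.restrict (Ioc t (t + N * T))) =
      c • AddCircle.haarAddCircle := by
    rw [AddCircle.map_coe_restrict_Ioc_add_nat_mul, volume_eq_smul_haarAddCircle,
      ← Nat.cast_smul_eq_nsmul ℝ≥0∞, smul_smul]
  have hscale : ∀ s : Finset ℤ,
      eLpNorm (fun x : ℝ => G x - ∑ n ∈ s, fourierCoeff G n • fourier n (x : AddCircle T)) 2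
        (volume.restrict (Ioc t (t + N * T))) =
      c ^ (1 / (2 : ℝ≥0∞)).toReal •
        eLpNorm (fun x => G x - ∑ n ∈ s, fourierCoeff G n • fourier n x) 2
          AddCircle.haarAddCircle := by
    intro s
    have hmeas : AEStronglyMeasurable
        (fun x => G x - ∑ n ∈ s, fourierCoeff G n • fourier n x) AddCircle.haarAddCircle :=
      hG.1.sub (Continuous.aestronglyMeasurable (by fun_prop))
    rw [← eLpNorm_smul_measure_of_ne_top ENNReal.ofNat_ne_top, ← hmap,
      eLpNorm_map_measure (hmap ▸ hmeas.smul_measure c) AddCircle.measurable_mk'.aemeasurable]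
    rfl
  simp_rw [hscale, smul_eq_mul]
  simpa using ENNReal.Tendsto.const_mul hG.tendsto_eLpNorm_fourier_partial_sum
    (Or.inr (by simp [c, ENNReal.mul_ne_top]))

end Fourier

theorem MeasureTheory.MemLp.tendsto_eLpNorm_fourier_partial_sum_Ioo
    {G : AddCircle (1 : ℝ) → ℂ} (hG : MemLp G 2 AddCircle.haarAddCircle) :
    Tendsto (fun s : Finset ℤ => eLpNorm
      (fun t : ℝ => G t - ∑ n ∈ s,
        fourierCoeff G n * Complex.exp (2 * Real.pi * Complex.I * (n : ℂ) * (t : ℂ)))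
      2 (volume.restrict (Ioo (-1 : ℝ) 1))) atTop (𝓝 0) := by
  have hμ : volume.restrict (Ioo (-1 : ℝ) 1) =
      volume.restrict (Ioc (-1 : ℝ) (-1 + (2 : ℕ) * 1)) := by
    norm_num [Measure.restrict_congr_set Ioo_ae_eq_Ioc]
  simpa [hμ, fourier_coe_apply] using hG.tendsto_eLpNorm_fourier_partial_sum_comp_coe (-1) 2

theorem MeasureTheory.MemLp.continuous_mul_restrict_Ioc {p : ℝ≥0∞} {f φ : ℝ → ℂ} {a b : ℝ}
    (hf : MemLp f p (volume.restrict (Ioc a b))) (hφ : Continuous φ) :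
    MemLp (fun s => φ s * f s) p (volume.restrict (Ioc a b)) := by
  obtain ⟨C, hC⟩ := (isCompact_Icc (a := a) (b := b)).exists_bound_of_continuousOn
    hφ.continuousOn
  refine hf.mul' (memLp_top_of_bound hφ.aestronglyMeasurable C ?_)
  exact (ae_restrict_iff' measurableSet_Ioc).2
    (ae_of_all _ fun s hs => hC s (Ioc_subset_Icc_self hs))

theorem MeasureTheory.MemLp.comp_sub_const_restrict_Ioc {p : ℝ≥0∞} {f : ℝ → ℂ} {a b : ℝ}
    (hf : MemLp f p (volume.restrict (Ioc a b))) (c : ℝ) :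
    MemLp (fun s => f (s - c)) p (volume.restrict (Ioc (a + c) (b + c))) := by
  have h := (measurePreserving_sub_right volume c).restrict_preimage (s := Ioc a b)
    measurableSet_Ioc
  rw [preimage_sub_const_Ioc] at h
  exact hf.comp_measurePreserving h

theorem exists_addCircle_exp_decomposition (Q : ℝ → ℂ)
    (hQ : MemLp Q 2 (volume.restrict (Ioc (-1 : ℝ) 1))) :
    ∃ G₁ G₂ : AddCircle (1 : ℝ) → ℂ, MemLp G₁ 2 AddCircle.haarAddCircle ∧
      MemLp G₂ 2 AddCircle.haarAddCircle ∧
      ∀ t ∈ Ioc (-1 : ℝ) 1, Q t =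
        Complex.exp (-(2 * Real.pi * (t : ℂ))) * G₁ t +
          Complex.exp (2 * Real.pi * (t : ℂ)) * G₂ t := by
  set c : ℂ := Complex.exp (2 * Real.pi)
  have hc0 : c ≠ 0 := Complex.exp_ne_zero _
  have hc2 : c ^ 2 - 1 ≠ 0 := by
    have h1 : 1 < Real.exp (2 * Real.pi) := Real.one_lt_exp_iff.2 (by positivity)
    have : c ^ 2 - 1 = ((Real.exp (2 * Real.pi) ^ 2 - 1 : ℝ) : ℂ) := by
      push_cast [c, Complex.ofReal_exp]; rfl
    rw [this, Complex.ofReal_ne_zero, sub_ne_zero]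
    exact (one_lt_pow₀ h1 two_ne_zero).ne'
  have hQ₀ : MemLp Q 2 (volume.restrict (Ioc 0 (0 + 1))) :=
    hQ.mono_measure (Measure.restrict_mono (Ioc_subset_Ioc (by norm_num) (by norm_num)) le_rfl)
  have hQ₁ : MemLp (fun s => Q (s - 1)) 2 (volume.restrict (Ioc 0 (0 + 1))) := by
    have := (hQ.mono_measure (Measure.restrict_mono (Ioc_subset_Ioc le_rfl (by norm_num)) le_rfl)
      : MemLp Q 2 (volume.restrict (Ioc (-1) 0))).comp_sub_const_restrict_Ioc 1
    simpa using this
  refine ⟨liftIoc 1 0 fun s =>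
      Complex.exp (2 * Real.pi * (s : ℂ)) * ((c - c⁻¹)⁻¹ * (Q (s - 1) - c⁻¹ * Q s)),
    liftIoc 1 0 fun s =>
      Complex.exp (-(2 * Real.pi * (s : ℂ))) * ((c - c⁻¹)⁻¹ * (c * Q s - Q (s - 1))),
    ?_, ?_, ?_⟩
  · exact (((hQ₁.sub (hQ₀.const_mul c⁻¹)).const_mul _).continuous_mul_restrict_Ioc
      (by fun_prop)).memLp_liftIoc.haarAddCircle
  · exact ((((hQ₀.const_mul c).sub hQ₁).const_mul _).continuous_mul_restrict_Ioc
      (by fun_prop)).memLp_liftIoc.haarAddCircle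
  intro t ht
  have hX := Complex.exp_ne_zero (2 * Real.pi * (t : ℂ))
  rcases le_or_gt t 0 with hneg | hpos
  · have hmem : t + 1 ∈ Ioc (0 : ℝ) (0 + 1) := ⟨by linarith [ht.1], by linarith⟩
    have hshift : Complex.exp (2 * Real.pi * ((t + 1 : ℝ) : ℂ)) =
        Complex.exp (2 * Real.pi * (t : ℂ)) * c := by
      rw [← Complex.exp_add]; push_cast; ring_nf
    rw [← AddCircle.coe_add_period 1 t, liftIoc_coe_apply hmem, liftIoc_coe_apply hmem,
      add_sub_cancel_right, Complex.exp_neg, Complex.exp_neg, hshift]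
    field_simp
    ring
  · have hmem : t ∈ Ioc (0 : ℝ) (0 + 1) := ⟨hpos, by linarith [ht.2]⟩
    rw [liftIoc_coe_apply hmem, liftIoc_coe_apply hmem, Complex.exp_neg]
    field_simp
    ring

/-- every `Q ∈ L²(-1,1)` can be written as
`Q(t) = e^{-2πt} ∑ₙ aₙ e^{2πint} + e^{2πt} ∑ₙ bₙ e^{2πint}` a.e. on `(-1,1)`, with
`{aₙ}, {bₙ} ∈ ℓ²(ℤ)` and both series converging in `L²(-1,1)`. -/
theorem statement19
    (Q : ℝ → ℂ) (hQ : MemLp Q 2 (volume.restrict (Ioo (-1 : ℝ) 1))) :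
    ∃ (a b : ℤ → ℂ) (F₁ F₂ : ℝ → ℂ),
      Summable (fun n : ℤ => ‖a n‖ ^ 2) ∧
      Summable (fun n : ℤ => ‖b n‖ ^ 2) ∧
      Tendsto (fun s : Finset ℤ => eLpNorm
          (fun t : ℝ => F₁ t - ∑ n ∈ s,
            a n * Complex.exp (2 * Real.pi * Complex.I * (n : ℂ) * (t : ℂ)))
          2 (volume.restrict (Ioo (-1 : ℝ) 1))) atTop (𝓝 0) ∧
      Tendsto (fun s : Finset ℤ => eLpNorm
          (fun t : ℝ => F₂ t - ∑ n ∈ s,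
            b n * Complex.exp (2 * Real.pi * Complex.I * (n : ℂ) * (t : ℂ)))
          2 (volume.restrict (Ioo (-1 : ℝ) 1))) atTop (𝓝 0) ∧
      (∀ᵐ t : ℝ ∂(volume.restrict (Ioo (-1 : ℝ) 1)),
        Q t = Complex.exp (-(2 * Real.pi * (t : ℂ))) * F₁ t +
          Complex.exp (2 * Real.pi * (t : ℂ)) * F₂ t) := by
  have hQ' : MemLp Q 2 (volume.restrict (Ioc (-1 : ℝ) 1)) := by
    rwa [← Measure.restrict_congr_set Ioo_ae_eq_Ioc]
  obtain ⟨G₁, G₂, hG₁, hG₂, hdecomp⟩ := exists_addCircle_exp_decomposition Q hQ'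
  refine ⟨fourierCoeff G₁, fourierCoeff G₂, fun t => G₁ t, fun t => G₂ t,
    hG₁.summable_sq_fourierCoeff, hG₂.summable_sq_fourierCoeff,
    hG₁.tendsto_eLpNorm_fourier_partial_sum_Ioo, hG₂.tendsto_eLpNorm_fourier_partial_sum_Ioo, ?_⟩
  exact (ae_restrict_iff' measurableSet_Ioo).2
    (ae_of_all _ fun t ht => hdecomp t (Ioo_subset_Ioc_self ht))
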